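/- Let ℓ be a positive integer, τ ∈ ℍ, and ν, μ ∈ ℂ with ν+μ ∉ ℤτ+ℤ. Then for every integer n ≥ 1: K_ℓ(τ, ν, μ + nτ) = e^{iπ n² ℓ τ + 2iπ n ℓ μ} K_ℓ(τ, ν, μ) + Σ_{j=0}^{ℓn−1} e^{2iπ j(ν+μ) + 2iπ n j τ} ϑ(ℓτ, ℓν + jτ), and for every integer n ≤ −1: K_ℓ(τ, ν, μ + nτ) = e^{iπ n² ℓ τ + 2iπ n ℓ μ} K_ℓ(τ, ν, μ) − Σ_{j=ℓn}^{−1} e^{2iπ j(ν+μ) + 2iπ n j τ} ϑ(ℓτ, ℓν + jτ). -/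

import Mathlib

/-!
Shifting `μ` by `nτ` shifts the index of the denominators: with `w_m = e^{2πi(ν+μ+(m+n)τ)}` the
summands of `K_ℓ(τ, ν, μ + nτ)` are `a_m / (1 - w_m)`, where `a_m` is the level-`ℓ` theta term.
The geometric sum gives `1/(1-w) = w^{ℓn}/(1-w) + ∑_{0 ≤ j < ℓn} w^j` (the sum over `ℓn ≤ j < 0`
is subtracted when `n < 0`). Since `a_m w_m^{ℓn} = e^{iπn²ℓτ + 2iπnℓμ} a_{m+n}`, the first part
reindexes to the multiple of `K_ℓ(τ, ν, μ)`, and `∑_m a_m w_m^j` is `ϑ(ℓτ, ℓν + jτ)` times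
`e^{2iπj(ν+μ) + 2iπnjτ}`. All series converge because `|w_m|` tends to `0` and to `∞` at the two
ends of `ℤ`, so `1 - w_m` stays away from `0` outside a finite set.
-/

open Complex Real MeasureTheory Finset

noncomputable def appellK (ℓ : ℕ) (τ ν μ : ℂ) : ℂ :=
  ∑' m : ℤ,
    Complex.exp ((π : ℂ) * I * (m : ℂ) ^ 2 * ℓ * τ +
        2 * (π : ℂ) * I * (m : ℂ) * ℓ * ν) /
      (1 - Complex.exp (2 * (π : ℂ) * I * (ν + μ + (m : ℂ) * τ)))

noncomputable def theta (τ ν : ℂ) : ℂ :=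
  ∑' m : ℤ, Complex.exp ((π : ℂ) * I * (m : ℂ) ^ 2 * τ + 2 * (π : ℂ) * I * (m : ℂ) * ν)

noncomputable def PhiFun (τ μ : ℂ) : ℂ :=
  -I / (2 * (-I * τ) ^ (1/2 : ℂ)) -
    (1/2) * ∫ x : ℝ, Complex.exp (-(π : ℂ) * (x : ℂ) ^ 2) *
      (Complex.sinh ((π : ℂ) * (x : ℂ) * (-I * τ) ^ (1/2 : ℂ) * (1 + 2 * μ / τ)) /
       Complex.sinh ((π : ℂ) * (x : ℂ) * (-I * τ) ^ (1/2 : ℂ)))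

noncomputable def theta10 (τ ν : ℂ) : ℂ :=
  ∑' m : ℤ, Complex.exp ((π : ℂ) * I * ((m : ℂ) ^ 2 - (m : ℂ)) * τ - 2 * (π : ℂ) * I * (m : ℂ) * ν)

noncomputable def theta11 (τ ν : ℂ) : ℂ :=
  ∑' m : ℤ, (-1 : ℂ) ^ m *
    Complex.exp ((π : ℂ) * I * ((m : ℂ) ^ 2 - (m : ℂ)) * τ - 2 * (π : ℂ) * I * (m : ℂ) * ν)

noncomputable def etaF (τ : ℂ) : ℂ :=
  Complex.exp ((π : ℂ) * I * τ / 12) * ∏' m : ℕ, (1 - Complex.exp (2 * (π : ℂ) * I * ((m : ℂ) + 1) * τ))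

noncomputable def thetaHL (r : ℤ) (ℓ : ℕ) (τ ν : ℂ) : ℂ :=
  ∑' n : ℤ, Complex.exp (2 * (π : ℂ) * I * ℓ *
    ((((n : ℂ) + (r : ℂ) / (2 * ℓ)) ^ 2) * τ + ((n : ℂ) + (r : ℂ) / (2 * ℓ)) * ν))

noncomputable def zetaCD (c d : ℤ) : ℂ :=
  if Even c then Complex.exp ((π : ℂ) * I * ((d : ℂ) - 1) / 4) * (jacobiSym c d.natAbs : ℂ)
  else Complex.exp (-(π : ℂ) * I * (c : ℂ) / 4) * (jacobiSym d c.natAbs : ℂ)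

open Filter Topology

theorem zpow_div_one_sub_eq_add_sum_Ico {K : Type*} [Field K] {y : K} (hy0 : y ≠ 0) (hy1 : y ≠ 1)
    {a b : ℤ} (hab : a ≤ b) : y ^ a / (1 - y) = y ^ b / (1 - y) + ∑ j ∈ Ico a b, y ^ j := by
  induction b, hab using Int.leInduction with
  | base => simp
  | succ b hab ih =>
    have : 1 - y ≠ 0 := sub_ne_zero.mpr hy1.symm
    rw [← insert_Ico_right_eq_Ico_add_one hab, sum_insert right_notMem_Ico, ih, zpow_add_one₀ hy0]
    field_simp
    ring

theorem tsum_mul_zpow_div_one_sub_eq {K ι : Type*} [Field K] [TopologicalSpace K]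
    [IsTopologicalAddGroup K] [T2Space K] {A w : ι → K} (hw0 : ∀ i, w i ≠ 0) (hw1 : ∀ i, w i ≠ 1)
    {a b : ℤ} (hab : a ≤ b) (ha : Summable fun i => A i * w i ^ a / (1 - w i))
    (hs : ∀ j ∈ Ico a b, Summable fun i => A i * w i ^ j) :
    ∑' i, A i * w i ^ a / (1 - w i) =
      ∑' i, A i * w i ^ b / (1 - w i) + ∑ j ∈ Ico a b, ∑' i, A i * w i ^ j := by
  have hpt (i : ι) : A i * w i ^ a / (1 - w i) =
      A i * w i ^ b / (1 - w i) + ∑ j ∈ Ico a b, A i * w i ^ j := by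
    rw [mul_div_assoc, mul_div_assoc, zpow_div_one_sub_eq_add_sum_Ico (hw0 i) (hw1 i) hab, mul_add,
      mul_sum]
  have hsum : Summable fun i => ∑ j ∈ Ico a b, A i * w i ^ j := summable_sum hs
  have hb : Summable fun i => A i * w i ^ b / (1 - w i) :=
    (ha.sub hsum).congr fun i => by rw [hpt, add_sub_cancel_right]
  rw [tsum_congr hpt, hb.tsum_add hsum, Summable.tsum_finsetSum hs]

theorem eventually_half_le_norm_one_sub {E : Type*} [SeminormedRing E] [NormOneClass E]
    {y : ℤ → E} (htop : Tendsto (‖y ·‖) atTop (𝓝 0)) (hbot : Tendsto (‖y ·‖) atBot atTop) :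
    ∀ᶠ m in cofinite, 1 / 2 ≤ ‖1 - y m‖ := by
  rw [Int.cofinite_eq, eventually_sup]
  constructor
  · filter_upwards [hbot.eventually_ge_atTop 2] with m hm
    linarith [norm_sub_norm_le (y m) 1, norm_sub_rev (y m) 1, norm_one (α := E)]
  · filter_upwards [htop.eventually (ge_mem_nhds (by norm_num : (0 : ℝ) < 1 / 2))] with m hm
    linarith [norm_sub_norm_le 1 (y m), norm_one (α := E)]

theorem Summable.div_one_sub {𝕜 : Type*} [NormedField 𝕜] [CompleteSpace 𝕜] {A y : ℤ → 𝕜}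
    (hA : Summable (‖A ·‖)) (htop : Tendsto (‖y ·‖) atTop (𝓝 0))
    (hbot : Tendsto (‖y ·‖) atBot atTop) : Summable fun m => A m / (1 - y m) := by
  refine .of_norm_bounded_eventually (hA.mul_left 2) ?_
  filter_upwards [eventually_half_le_norm_one_sub htop hbot] with m hm
  rw [norm_div, div_le_iff₀ (by linarith)]
  nlinarith [norm_nonneg (A m)]

theorem norm_exp_two_pi_I_add_mul (c τ : ℂ) (m : ℤ) :
    ‖cexp (2 * π * I * (c + m * τ))‖ = Real.exp (-(2 * π * (c.im + m * τ.im))) := by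
  rw [Complex.norm_exp]
  congr 1
  simp

theorem tendsto_norm_exp_two_pi_I_add_mul_atTop {τ : ℂ} (hτ : 0 < τ.im) (c : ℂ) :
    Tendsto (fun m : ℤ => ‖cexp (2 * π * I * (c + m * τ))‖) atTop (𝓝 0) := by
  simp only [norm_exp_two_pi_I_add_mul]
  exact Real.tendsto_exp_atBot.comp <| tendsto_neg_atTop_atBot.comp <|
    (tendsto_atTop_add_const_left _ _ (tendsto_intCast_atTop_atTop.atTop_mul_const hτ)).const_mul_atTop
      two_pi_pos

theorem tendsto_norm_exp_two_pi_I_add_mul_atBot {τ : ℂ} (hτ : 0 < τ.im) (c : ℂ) :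
    Tendsto (fun m : ℤ => ‖cexp (2 * π * I * (c + m * τ))‖) atBot atTop := by
  simp only [norm_exp_two_pi_I_add_mul]
  exact Real.tendsto_exp_atTop.comp <| tendsto_neg_atBot_atTop.comp <|
    (tendsto_atBot_add_const_left _ _
      ((tendsto_intCast_atBot_iff.2 tendsto_id).atBot_mul_const hτ)).const_mul_atBot two_pi_pos

theorem Summable.div_one_sub_exp {A : ℤ → ℂ} (hA : Summable A) {τ : ℂ} (hτ : 0 < τ.im) (c : ℂ) :
    Summable fun m : ℤ => A m / (1 - cexp (2 * π * I * (c + m * τ))) :=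
  hA.norm.div_one_sub (tendsto_norm_exp_two_pi_I_add_mul_atTop hτ c)
    (tendsto_norm_exp_two_pi_I_add_mul_atBot hτ c)

theorem exp_two_pi_I_ne_one {z τ : ℂ} (h : ∀ m n : ℤ, z ≠ m * τ + n) (m : ℤ) :
    cexp (2 * π * I * (z + m * τ)) ≠ 1 := by
  rw [Ne, Complex.exp_eq_one_iff]
  rintro ⟨k, hk⟩
  refine h (-m) k ?_
  push_cast
  linear_combination mul_left_cancel₀ two_pi_I_ne_zero (hk.trans (mul_comm _ _))

theorem theta_eq_jacobiTheta₂ (τ z : ℂ) : theta τ z = jacobiTheta₂ z τ :=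
  tsum_congr fun m => by rw [jacobiTheta₂_term, add_comm]

theorem jacobiTheta₂_term_mul_exp_zpow (m j : ℤ) (z T c s : ℂ) :
    jacobiTheta₂_term m z T * cexp (2 * π * I * (c + m * s)) ^ j =
      cexp (2 * π * I * j * c) * jacobiTheta₂_term m (z + j * s) T := by
  simp only [jacobiTheta₂_term, ← Complex.exp_int_mul, ← Complex.exp_add]
  congr 1
  ring

theorem hasSum_jacobiTheta₂_term_mul_exp_zpow {T : ℂ} (hT : 0 < T.im) (j : ℤ) (z c s : ℂ) :
    HasSum (fun m : ℤ => jacobiTheta₂_term m z T * cexp (2 * π * I * (c + m * s)) ^ j)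
      (cexp (2 * π * I * j * c) * jacobiTheta₂ (z + j * s) T) := by
  simp only [jacobiTheta₂_term_mul_exp_zpow]
  exact (((summable_jacobiTheta₂_term_iff _ _).mpr hT).hasSum).mul_left _

theorem appellK_eq_tsum (ℓ : ℕ) (τ ν μ : ℂ) :
    appellK ℓ τ ν μ =
      ∑' m : ℤ, jacobiTheta₂_term m (ℓ * ν) (ℓ * τ) / (1 - cexp (2 * π * I * (ν + μ + m * τ))) :=
  tsum_congr fun m => by rw [jacobiTheta₂_term]; congr 2; ring

theorem jacobiTheta₂_term_mul_exp_zpow_eq_mul_term_add (ℓ : ℕ) (τ ν μ : ℂ) (m n : ℤ) :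
    jacobiTheta₂_term m (ℓ * ν) (ℓ * τ) * cexp (2 * π * I * (ν + (μ + n * τ) + m * τ)) ^ (ℓ * n) =
      cexp (π * I * n ^ 2 * ℓ * τ + 2 * π * I * n * ℓ * μ) *
        jacobiTheta₂_term (m + n) (ℓ * ν) (ℓ * τ) := by
  simp only [jacobiTheta₂_term, ← Complex.exp_int_mul, ← Complex.exp_add]
  congr 1
  push_cast
  ring

theorem tsum_mul_exp_zpow_div_one_sub_eq_mul_appellK (ℓ : ℕ) (τ ν μ : ℂ) (n : ℤ) :
    ∑' m : ℤ, jacobiTheta₂_term m (ℓ * ν) (ℓ * τ) *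
        cexp (2 * π * I * (ν + (μ + n * τ) + m * τ)) ^ (ℓ * n) /
        (1 - cexp (2 * π * I * (ν + (μ + n * τ) + m * τ))) =
      cexp (π * I * n ^ 2 * ℓ * τ + 2 * π * I * n * ℓ * μ) * appellK ℓ τ ν μ := by
  rw [appellK_eq_tsum, ← tsum_mul_left]
  symm
  rw [← (Equiv.addRight n).tsum_eq]
  refine tsum_congr fun m => ?_
  rw [jacobiTheta₂_term_mul_exp_zpow_eq_mul_term_add, mul_div_assoc, Equiv.coe_addRight]
  congr 4
  push_cast
  ring

theorem appellK_open_quasiperiodicity (ℓ : ℕ) (hℓ : 0 < ℓ) (τ ν μ : ℂ)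
    (hτ : 0 < τ.im) (h : ∀ m n : ℤ, ν + μ ≠ (m : ℂ) * τ + (n : ℂ)) (n : ℤ) :
    (1 ≤ n →
      appellK ℓ τ ν (μ + (n : ℂ) * τ) =
        Complex.exp ((π : ℂ) * I * (n : ℂ) ^ 2 * ℓ * τ + 2 * (π : ℂ) * I * (n : ℂ) * ℓ * μ) *
          appellK ℓ τ ν μ +
        ∑ j ∈ Finset.Icc (0 : ℤ) ((ℓ : ℤ) * n - 1),
          Complex.exp (2 * (π : ℂ) * I * (j : ℂ) * (ν + μ) + 2 * (π : ℂ) * I * (n : ℂ) * (j : ℂ) * τ) *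
            theta ((ℓ : ℂ) * τ) ((ℓ : ℂ) * ν + (j : ℂ) * τ)) ∧
    (n ≤ -1 →
      appellK ℓ τ ν (μ + (n : ℂ) * τ) =
        Complex.exp ((π : ℂ) * I * (n : ℂ) ^ 2 * ℓ * τ + 2 * (π : ℂ) * I * (n : ℂ) * ℓ * μ) *
          appellK ℓ τ ν μ -
        ∑ j ∈ Finset.Icc ((ℓ : ℤ) * n) (-1 : ℤ),
          Complex.exp (2 * (π : ℂ) * I * (j : ℂ) * (ν + μ) + 2 * (π : ℂ) * I * (n : ℂ) * (j : ℂ) * τ) *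
            theta ((ℓ : ℂ) * τ) ((ℓ : ℂ) * ν + (j : ℂ) * τ)) := by
  have hℓτ : 0 < (ℓ * τ : ℂ).im := by simpa using mul_pos (Nat.cast_pos.mpr hℓ) hτ
  have hpiece (j : ℤ) : HasSum (fun m : ℤ => jacobiTheta₂_term m (ℓ * ν) (ℓ * τ) *
        cexp (2 * π * I * (ν + (μ + n * τ) + m * τ)) ^ j)
      (cexp (2 * π * I * j * (ν + μ) + 2 * π * I * n * j * τ) * theta (ℓ * τ) (ℓ * ν + j * τ)) := by
    rw [theta_eq_jacobiTheta₂, show 2 * π * I * j * (ν + μ) + 2 * π * I * n * j * τ =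
      2 * π * I * j * (ν + (μ + n * τ)) by ring]
    exact hasSum_jacobiTheta₂_term_mul_exp_zpow hℓτ j _ _ τ
  have hne : ∀ m k : ℤ, ν + (μ + n * τ) ≠ m * τ + k := fun m k hmk =>
    h (m - n) k (by push_cast; linear_combination hmk)
  have hsplit {a b : ℤ} (hab : a ≤ b) := tsum_mul_zpow_div_one_sub_eq
    (fun _ => Complex.exp_ne_zero _) (exp_two_pi_I_ne_one hne) hab
    ((hpiece a).summable.div_one_sub_exp hτ _) fun j _ => (hpiece j).summable
  have hK : appellK ℓ τ ν (μ + n * τ) = ∑' m : ℤ, jacobiTheta₂_term m (ℓ * ν) (ℓ * τ) *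
      cexp (2 * π * I * (ν + (μ + n * τ) + m * τ)) ^ (0 : ℤ) /
        (1 - cexp (2 * π * I * (ν + (μ + n * τ) + m * τ))) := by
    simp only [appellK_eq_tsum, zpow_zero, mul_one]
  refine ⟨fun hn => ?_, fun hn => ?_⟩
  · rw [hK, hsplit (b := ℓ * n) (by positivity), tsum_mul_exp_zpow_div_one_sub_eq_mul_appellK,
      ← Icc_sub_one_right_eq_Ico]
    simp only [(hpiece _).tsum_eq]
  · rw [hK, eq_sub_iff_add_eq, ← tsum_mul_exp_zpow_div_one_sub_eq_mul_appellK,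
      hsplit (a := ℓ * n) (b := 0) (by nlinarith), ← Icc_sub_one_right_eq_Ico]
    simp only [zero_sub, (hpiece _).tsum_eq]
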